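/- Let $\{x_j\}_{j=0}^d \subset [-\ell,\ell]$ be a $\delta$-separated set of $d+1$ points. Then for any polynomial $p$ of degree at most $d$: $\sup_{x \in [-\ell,\ell]} |p(x)| \leq (2 e^2 (\delta d)^{-1} \ell)^d \max_{0 \leq j \leq d} |p(x_j)|$. -/

import Mathlib

/-!
Write `p` in the Lagrange basis of the nodes, so that `|p(y)|` is at most the Lebesgue function
`∑ᵢ |Lᵢ(y)|` times `maxⱼ |p(xⱼ)|`. After sorting the nodes, separation gives
`|xᵢ - xⱼ| ≥ δ |i - j|`, so the denominator of `Lᵢ` is at least `δ^d i! (d - i)!`, while its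
numerator is at most `(2ℓ)^d`. Summing over `i` with `∑ᵢ 1 / (i! (d - i)!) = 2^d / d!` bounds the
Lebesgue function by `(4ℓ/δ)^d / d!`, and `d^d ≤ e^d d!` turns this into the stated constant.
-/

open Real Polynomial Finset
open scoped Nat

lemma prod_abs_sub_range_erase (d i : ℕ) (hi : i ≤ d) :
    ∏ j ∈ (range (d + 1)).erase i, |(i : ℝ) - j| = i ! * (d - i)! := by
  have hbelow : ∏ j ∈ range i, |(i : ℝ) - j| = i ! := by
    rw [← prod_range_reflect, ← prod_range_add_one_eq_factorial, Nat.cast_prod]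
    refine prod_congr rfl fun j hj => ?_
    have := mem_range.1 hj
    rw [Nat.cast_sub (by omega), Nat.cast_sub (by omega), abs_of_nonneg (by push_cast; linarith)]
    push_cast
    ring
  have habove : ∏ j ∈ Ico (i + 1) (d + 1), |(i : ℝ) - j| = (d - i)! := by
    rw [prod_Ico_eq_prod_range, show d + 1 - (i + 1) = d - i by omega,
      ← prod_range_add_one_eq_factorial, Nat.cast_prod]
    refine prod_congr rfl fun j _ => ?_
    rw [abs_sub_comm, abs_of_nonneg (by push_cast; linarith)]
    push_cast
    ring
  have hsplit : (range (d + 1)).erase i = range i ∪ Ico (i + 1) (d + 1) := by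
    ext j
    simp only [mem_erase, mem_range, mem_union, mem_Ico]
    omega
  rw [hsplit, prod_union (disjoint_left.2 fun j h h' => by simp at h h'; omega), hbelow, habove]

lemma Fin.prod_abs_sub_univ_erase (d : ℕ) (i : Fin (d + 1)) :
    ∏ j ∈ univ.erase i, |((i : ℕ) : ℝ) - (j : ℕ)| = (i : ℕ)! * (d - i)! := by
  have hmap : (univ.erase i).map Fin.valEmbedding = (range (d + 1)).erase i := by
    ext j
    simp
  rw [← prod_abs_sub_range_erase d i (Nat.lt_succ_iff.1 i.2), ← hmap, prod_map]
  rfl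

lemma Fin.sum_inv_factorial_mul_factorial (d : ℕ) :
    ∑ i : Fin (d + 1), (((i : ℕ)! : ℝ) * (d - i)!)⁻¹ = 2 ^ d / d ! := by
  have hchoose : (2 : ℝ) ^ d = ∑ i ∈ range (d + 1), (d.choose i : ℝ) := by
    exact_mod_cast (Nat.sum_range_choose d).symm
  rw [Fin.sum_univ_eq_sum_range (fun i => ((i ! : ℝ) * (d - i)!)⁻¹), hchoose, sum_div]
  refine sum_congr rfl fun i hi => ?_
  rw [Nat.cast_choose ℝ (Nat.lt_succ_iff.1 (mem_range.1 hi))]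
  field_simp

lemma four_pow_div_factorial_le (d : ℕ) : (4 : ℝ) ^ d / d ! ≤ (2 * exp 2 / d) ^ d := by
  rcases Nat.eq_zero_or_pos d with rfl | hd
  · simp
  have htwo : (2 : ℝ) ^ d ≤ exp d := by
    rw [← exp_one_pow]
    exact pow_le_pow_left₀ zero_le_two (by linarith [add_one_le_exp (1 : ℝ)]) d
  have hpow_le : (d : ℝ) ^ d ≤ exp d * d ! :=
    (div_le_iff₀ (by positivity)).1 (pow_div_factorial_le_exp _ d.cast_nonneg d)
  have hexp : exp 2 ^ d = exp d * exp d := by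
    rw [← exp_nat_mul, ← exp_add]
    ring_nf
  rw [div_pow, div_le_div_iff₀ (by positivity) (by positivity), mul_pow, hexp,
    show (4 : ℝ) ^ d = 2 ^ d * 2 ^ d by rw [← mul_pow]; norm_num]
  calc 2 ^ d * 2 ^ d * (d : ℝ) ^ d ≤ 2 ^ d * exp d * (exp d * d !) := by gcongr
    _ = 2 ^ d * (exp d * exp d) * d ! := by ring

lemma four_mul_div_pow_div_factorial_le (d : ℕ) {ℓ δ : ℝ} (hℓ : 0 ≤ ℓ) (hδ : 0 ≤ δ) :
    (4 * ℓ / δ) ^ d / d ! ≤ (2 * exp 2 * (δ * d)⁻¹ * ℓ) ^ d := by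
  rw [show 4 * ℓ / δ = 4 * (ℓ / δ) by ring,
    show 2 * exp 2 * (δ * d)⁻¹ * ℓ = 2 * exp 2 / d * (ℓ / δ) by ring,
    mul_pow, mul_pow, mul_div_right_comm]
  gcongr
  exact four_pow_div_factorial_le d

section SeparatedNodes

variable {n : ℕ} {δ : ℝ} {x : Fin (n + 1) → ℝ}

lemma injective_of_separated (hδ : 0 < δ) (hsep : ∀ i j, i ≠ j → δ ≤ |x i - x j|) :
    Function.Injective x := by
  intro i j hij
  by_contra hne
  have := hsep i j hne
  rw [hij, sub_self, abs_zero] at this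
  linarith

lemma StrictMono.sub_mul_le_sub_of_separated (hx : StrictMono x)
    (hsep : ∀ i j, i ≠ j → δ ≤ |x i - x j|) {i j : Fin (n + 1)} (hij : i ≤ j) :
    ((j : ℕ) - (i : ℕ) : ℝ) * δ ≤ x j - x i := by
  induction j using Fin.induction generalizing i with
  | zero =>
    obtain rfl : i = 0 := le_antisymm hij (Fin.zero_le i)
    simp
  | succ j ih =>
    rcases hij.eq_or_lt with rfl | hlt
    · simp
    have hgap : δ ≤ x j.succ - x j.castSucc := by
      have := hsep j.succ j.castSucc Fin.castSucc_lt_succ.ne'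
      rwa [abs_of_pos (sub_pos.2 (hx Fin.castSucc_lt_succ))] at this
    have := ih (Fin.le_castSucc_iff.2 hlt)
    simp only [Fin.val_succ, Fin.val_castSucc, Nat.cast_add, Nat.cast_one] at this ⊢
    linarith

lemma StrictMono.mul_abs_sub_le_abs_sub_of_separated (hx : StrictMono x)
    (hsep : ∀ i j, i ≠ j → δ ≤ |x i - x j|) (i j : Fin (n + 1)) :
    δ * |((i : ℕ) : ℝ) - (j : ℕ)| ≤ |x i - x j| := by
  rcases le_total i j with hij | hji
  · have := hx.sub_mul_le_sub_of_separated hsep hij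
    rw [abs_sub_comm, abs_sub_comm (x i),
      abs_of_nonneg (sub_nonneg.2 (Nat.cast_le.2 (Fin.le_iff_val_le_val.1 hij))),
      abs_of_nonneg (sub_nonneg.2 (hx.monotone hij))]
    linarith
  · have := hx.sub_mul_le_sub_of_separated hsep hji
    rw [abs_of_nonneg (sub_nonneg.2 (Nat.cast_le.2 (Fin.le_iff_val_le_val.1 hji))),
      abs_of_nonneg (sub_nonneg.2 (hx.monotone hji))]
    linarith

lemma StrictMono.pow_mul_factorial_le_prod_abs_sub (hx : StrictMono x)
    (hsep : ∀ i j, i ≠ j → δ ≤ |x i - x j|) (hδ : 0 ≤ δ) (i : Fin (n + 1)) :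
    δ ^ n * ((i : ℕ)! * (n - i)!) ≤ ∏ j ∈ univ.erase i, |x i - x j| := by
  calc δ ^ n * ((i : ℕ)! * (n - i)!) = ∏ j ∈ univ.erase i, δ * |((i : ℕ) : ℝ) - (j : ℕ)| := by
        rw [prod_mul_distrib, prod_const, card_erase_of_mem (mem_univ i), card_univ,
          Fintype.card_fin, Nat.add_sub_cancel, Fin.prod_abs_sub_univ_erase]
    _ ≤ ∏ j ∈ univ.erase i, |x i - x j| :=
        prod_le_prod (fun j _ => by positivity)
          fun j _ => hx.mul_abs_sub_le_abs_sub_of_separated hsep i j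

end SeparatedNodes

lemma Lagrange.abs_eval_basis {ι : Type*} [DecidableEq ι] (s : Finset ι) (v : ι → ℝ) (i : ι)
    (y : ℝ) :
    |(Lagrange.basis s v i).eval y| =
      (∏ j ∈ s.erase i, |y - v j|) / ∏ j ∈ s.erase i, |v i - v j| := by
  simp only [Lagrange.basis, Lagrange.basisDivisor, eval_prod, eval_mul, eval_C, eval_sub, eval_X,
    abs_prod, abs_mul, abs_inv, prod_mul_distrib, prod_inv_distrib]
  ring

lemma Lagrange.abs_eval_le_sum_abs_eval_basis_mul {ι : Type*} [DecidableEq ι] {s : Finset ι}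
    {v : ι → ℝ} (hvs : Set.InjOn v s) {p : ℝ[X]} (hp : p.degree < #s) {M : ℝ}
    (hM : ∀ i ∈ s, |p.eval (v i)| ≤ M) (y : ℝ) :
    |p.eval y| ≤ (∑ i ∈ s, |(Lagrange.basis s v i).eval y|) * M := by
  conv_lhs => rw [Lagrange.eq_interpolate hvs hp]
  rw [Lagrange.interpolate_apply, eval_finsetSum, sum_mul]
  refine (abs_sum_le_sum_abs _ _).trans (sum_le_sum fun i hi => ?_)
  rw [eval_mul, eval_C, abs_mul, mul_comm]
  exact mul_le_mul_of_nonneg_left (hM i hi) (abs_nonneg _)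

lemma StrictMono.sum_abs_eval_basis_le {d : ℕ} {ℓ δ : ℝ} (hδ : 0 < δ) {x : Fin (d + 1) → ℝ}
    (hmono : StrictMono x) (hsep : ∀ i j, i ≠ j → δ ≤ |x i - x j|)
    (hx : ∀ j, x j ∈ Set.Icc (-ℓ) ℓ) {y : ℝ} (hy : y ∈ Set.Icc (-ℓ) ℓ) :
    ∑ i, |(Lagrange.basis univ x i).eval y| ≤ (4 * ℓ / δ) ^ d / d ! := by
  have hℓ : 0 ≤ ℓ := by linarith [hy.1, hy.2]
  have hnum (i : Fin (d + 1)) : ∏ j ∈ univ.erase i, |y - x j| ≤ (2 * ℓ) ^ d := by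
    calc ∏ j ∈ univ.erase i, |y - x j| ≤ ∏ _j ∈ univ.erase i, 2 * ℓ :=
          prod_le_prod (fun j _ => abs_nonneg _) fun j _ => by
            rw [abs_le]; constructor <;> linarith [(hx j).1, (hx j).2, hy.1, hy.2]
      _ = (2 * ℓ) ^ d := by simp
  calc ∑ i, |(Lagrange.basis univ x i).eval y|
      ≤ ∑ i : Fin (d + 1), (2 * ℓ) ^ d / (δ ^ d * ((i : ℕ)! * (d - i)!)) :=
        sum_le_sum fun i _ => by
          rw [Lagrange.abs_eval_basis]
          exact div_le_div₀ (by positivity) (hnum i) (by positivity)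
            (hmono.pow_mul_factorial_le_prod_abs_sub hsep hδ.le i)
    _ = (2 * ℓ / δ) ^ d * ∑ i : Fin (d + 1), (((i : ℕ)! : ℝ) * (d - i)!)⁻¹ := by
        rw [mul_sum]
        refine sum_congr rfl fun i _ => ?_
        rw [div_pow]
        field_simp
    _ = (4 * ℓ / δ) ^ d / d ! := by
        rw [Fin.sum_inv_factorial_mul_factorial, show 4 * ℓ / δ = 2 * (2 * ℓ / δ) by ring,
          mul_pow]
        ring

theorem discrete_remez_interval_general
    (d : ℕ) (ℓ δ : ℝ) (hδ : 0 < δ)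
    (x : Fin (d + 1) → ℝ) (hx : ∀ j, x j ∈ Set.Icc (-ℓ) ℓ)
    (hsep : ∀ i j, i ≠ j → δ ≤ |x i - x j|)
    (p : Polynomial ℝ) (hp : p.natDegree ≤ d) :
    ∀ y ∈ Set.Icc (-ℓ) ℓ,
      |p.eval y| ≤ (2 * Real.exp 2 * (δ * d)⁻¹ * ℓ) ^ d * ⨆ j, |p.eval (x j)| := by
  intro y hy
  set M := ⨆ j, |p.eval (x j)|
  -- Sorting the nodes does not change their maximum, and makes their gaps add up.
  set σ := Tuple.sort x
  have hM (i : Fin (d + 1)) : |p.eval (x (σ i))| ≤ M :=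
    le_ciSup (f := fun j => |p.eval (x j)|) (Set.finite_range _).bddAbove _
  have hM0 : 0 ≤ M := (abs_nonneg _).trans (hM 0)
  have hmono : StrictMono (x ∘ σ) := (Tuple.monotone_sort x).strictMono_of_injective
    ((injective_of_separated hδ hsep).comp σ.injective)
  have hsep' (i j : Fin (d + 1)) (hij : i ≠ j) : δ ≤ |x (σ i) - x (σ j)| :=
    hsep _ _ (σ.injective.ne hij)
  have hdeg : p.degree < #(univ : Finset (Fin (d + 1))) := by
    rw [card_univ, Fintype.card_fin]
    exact (degree_le_of_natDegree_le hp).trans_lt (by exact_mod_cast d.lt_succ_self)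
  have hℓ : 0 ≤ ℓ := by linarith [hy.1, hy.2]
  calc |p.eval y| ≤ (∑ i, |(Lagrange.basis univ (x ∘ σ) i).eval y|) * M :=
        Lagrange.abs_eval_le_sum_abs_eval_basis_mul hmono.injective.injOn hdeg
          (fun i _ => hM i) y
    _ ≤ (4 * ℓ / δ) ^ d / d ! * M := by
        gcongr
        exact hmono.sum_abs_eval_basis_le hδ hsep' (fun j => hx _) hy
    _ ≤ (2 * exp 2 * (δ * d)⁻¹ * ℓ) ^ d * M := by
        gcongr
        exact four_mul_div_pow_div_factorial_le d hℓ hδ.le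

/-- Discrete Remez inequality on `[-ℓ,ℓ]`: a polynomial of degree at most `d` is controlled on
all of `[-ℓ,ℓ]` by its values on a `δ`-separated set of `d+1` points. -/
theorem discrete_remez_interval
    (d : ℕ) (hd : 1 ≤ d) (ℓ δ : ℝ) (hℓ : 0 < ℓ) (hδ : 0 < δ)
    (x : Fin (d + 1) → ℝ) (hx : ∀ j, x j ∈ Set.Icc (-ℓ) ℓ)
    (hsep : ∀ i j, i ≠ j → δ ≤ |x i - x j|)
    (p : Polynomial ℝ) (hp : p.natDegree ≤ d) :
    ∀ y ∈ Set.Icc (-ℓ) ℓ,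
      |p.eval y| ≤ (2 * Real.exp 2 * (δ * d)⁻¹ * ℓ) ^ d * ⨆ j, |p.eval (x j)| :=
  discrete_remez_interval_general d ℓ δ hδ x hx hsep p hp
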